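/- Let p be an odd prime and let A, B, e, n be positive integers with 1 ≤ e ≤ n and A·(1 + p) = B·(1 + p^{2e−1}). For integers 0 ≤ f ≤ n define w(f) = A·∑_{i=0}^{n−f} p^i + B·∑_{j=0}^{f−1} p^{n−f+1+2j}. Then w(e − 1) = w(e), and w(e) < w(f) for every f ∈ {0, 1, …, n} with f ∉ {e − 1, e}; that is, the minimum of w is attained exactly at the two consecutive values f = e − 1 and f = e. -/

import Mathlib

/-!
Multiplying the step `w (g + 1) - w g` by `1 + p` telescopes the two geometric sums and leaves
`p ^ (n - g) * (B * (1 + p ^ (2 * g + 1)) - A * (1 + p))`. Since `p ^ (2 * g + 1)` increases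
with `g` and equals `p ^ (2 * e - 1)` at `g = e - 1`, the hypothesis makes `w` strictly decreasing
up to `e - 1`, constant from `e - 1` to `e`, and strictly increasing from `e` on.
-/

open Finset

theorem one_add_mul_sum_range_succ_pow {R : Type*} [CommSemiring R] (p : R) (m g : ℕ) :
    (1 + p) * ∑ j ∈ range (g + 1), p ^ (m + 2 * j)
      = (1 + p) * ∑ j ∈ range g, p ^ (m + 1 + 2 * j) + p ^ m + p ^ (m + 1 + 2 * g) := by
  induction g with
  | zero => rw [sum_range_one, sum_range_zero]; ring
  | succ g ih =>
    rw [sum_range_succ, mul_add, ih, sum_range_succ, mul_add]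
    ring

section Order

variable {α : Type*} [Semiring α] [LinearOrder α] [IsStrictOrderedRing α] {a c u v x y : α}

theorem lt_of_mul_add_mul_eq_of_lt (hc : 0 < c) (h : a * u + c * x = a * v + c * y)
    (huv : a * u < a * v) : y < x :=
  lt_of_mul_lt_mul_left (not_le.1 fun hxy => (add_lt_add_of_lt_of_le huv hxy).ne h) hc.le

theorem lt_iff_lt_of_mul_add_mul_eq (ha : 0 < a) (hc : 0 < c)
    (h : a * u + c * x = a * v + c * y) : u < v ↔ y < x := by
  refine ⟨fun huv => lt_of_mul_add_mul_eq_of_lt hc h (mul_lt_mul_of_pos_left huv ha),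
    fun hyx => lt_of_mul_add_mul_eq_of_lt ha ?_ (mul_lt_mul_of_pos_left hyx hc)⟩
  rw [add_comm, ← h, add_comm]

end Order

def weight (p A B n f : ℕ) : ℕ :=
  A * ∑ i ∈ range (n - f + 1), p ^ i + B * ∑ j ∈ range f, p ^ (n - f + 1 + 2 * j)

namespace weight

variable {p A B n g : ℕ}

theorem one_add_mul_succ_add (hg : g < n) :
    (1 + p) * weight p A B n (g + 1) + p ^ (n - g) * (A * (1 + p))
      = (1 + p) * weight p A B n g + p ^ (n - g) * (B * (1 + p ^ (2 * g + 1))) := by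
  obtain ⟨m, rfl⟩ := Nat.exists_eq_add_of_lt hg
  have hsum := one_add_mul_sum_range_succ_pow p (m + 1) g
  simp only [weight, show g + m + 1 - (g + 1) + 1 = m + 1 by omega,
    show g + m + 1 - g = m + 1 by omega, sum_range_succ _ (m + 1)] at hsum ⊢
  linear_combination B * hsum

theorem succ_lt_iff (hp : 0 < p) (hg : g < n) :
    weight p A B n (g + 1) < weight p A B n g ↔ B * (1 + p ^ (2 * g + 1)) < A * (1 + p) :=
  lt_iff_lt_of_mul_add_mul_eq (by omega) (by positivity) (one_add_mul_succ_add hg)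

theorem lt_succ_iff (hp : 0 < p) (hg : g < n) :
    weight p A B n g < weight p A B n (g + 1) ↔ A * (1 + p) < B * (1 + p ^ (2 * g + 1)) :=
  lt_iff_lt_of_mul_add_mul_eq (by omega) (by positivity) (one_add_mul_succ_add hg).symm

theorem succ_eq (hg : g < n) (h : A * (1 + p) = B * (1 + p ^ (2 * g + 1))) :
    weight p A B n (g + 1) = weight p A B n g := by
  have := one_add_mul_succ_add (p := p) (A := A) (B := B) hg
  rw [h] at this
  exact Nat.eq_of_mul_eq_mul_left (by omega) (Nat.add_right_cancel this)

end weight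

theorem double_minimum_equality_case_general
    (p : ℕ) (hp : p.Prime)
    (A B e n : ℕ) (hB : 0 < B) (he : 1 ≤ e) (hen : e ≤ n)
    (h1 : A * (1 + p) = B * (1 + p ^ (2 * e - 1)))
    (w : ℕ → ℕ)
    (hw : ∀ f, w f = A * (∑ i ∈ Finset.range (n - f + 1), p ^ i)
        + B * (∑ j ∈ Finset.range f, p ^ (n - f + 1 + 2 * j))) :
    w (e - 1) = w e ∧ ∀ f, f ≤ n → f ≠ e - 1 → f ≠ e → w e < w f := by
  obtain rfl : w = weight p A B n := funext hw
  obtain ⟨k, rfl⟩ : ∃ k, e = k + 1 := ⟨e - 1, by omega⟩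
  rw [Nat.add_sub_cancel, show 2 * (k + 1) - 1 = 2 * k + 1 by omega] at *
  have hpow {a b : ℕ} : B * (1 + p ^ a) < B * (1 + p ^ b) ↔ a < b := by
    rw [mul_lt_mul_iff_right₀ hB, add_lt_add_iff_left, pow_lt_pow_iff_right₀ hp.one_lt]
  have hdecr : StrictAntiOn (weight p A B n) (Set.Icc 0 k) :=
    strictAntiOn_of_succ_lt Set.ordConnected_Icc fun g _ _ ⟨_, hg⟩ => by
      rw [Order.succ_eq_add_one] at hg ⊢
      rw [weight.succ_lt_iff hp.pos (by omega), h1, hpow]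
      omega
  have hincr : StrictMonoOn (weight p A B n) (Set.Icc (k + 1) n) :=
    strictMonoOn_of_lt_succ Set.ordConnected_Icc fun g _ ⟨hg, _⟩ ⟨_, hg'⟩ => by
      rw [Order.succ_eq_add_one] at hg' ⊢
      rw [weight.lt_succ_iff hp.pos (by omega), h1, hpow]
      omega
  have heq : weight p A B n k = weight p A B n (k + 1) := (weight.succ_eq (by omega) h1).symm
  refine ⟨heq, fun f hfn hfk hfk' => ?_⟩
  rcases lt_or_gt_of_ne hfk' with hlt | hgt
  · exact heq ▸ hdecr ⟨by omega, by omega⟩ ⟨by omega, le_rfl⟩ (by omega)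
  · exact hincr ⟨le_rfl, hen⟩ ⟨by omega, hfn⟩ hgt

/-- Lemma 6.10 (casethreetwo), arithmetic content: if `A(1+p) = B(1+p^{2e−1})`
with `1 ≤ e ≤ n`, then `w(f) = A(1+⋯+p^{n−f}) + B(p^{n−f+1}+⋯+p^{n+f−1})`
attains its minimum on `{0,…,n}` exactly at the two consecutive values
`f = e−1` and `f = e`. -/
theorem double_minimum_equality_case
    (p : ℕ) (hp : p.Prime) (hp2 : p ≠ 2)
    (A B e n : ℕ) (hA : 0 < A) (hB : 0 < B) (he : 1 ≤ e) (hen : e ≤ n)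
    (h1 : A * (1 + p) = B * (1 + p ^ (2 * e - 1)))
    (w : ℕ → ℕ)
    (hw : ∀ f, w f = A * (∑ i ∈ Finset.range (n - f + 1), p ^ i)
        + B * (∑ j ∈ Finset.range f, p ^ (n - f + 1 + 2 * j))) :
    w (e - 1) = w e ∧ ∀ f, f ≤ n → f ≠ e - 1 → f ≠ e → w e < w f :=
  double_minimum_equality_case_general p hp A B e n hB he hen h1 w hw
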